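/- arXiv:1406.3293 — 4 statements merged into one kernel-verified Lean document; each statement's English description precedes it below -/
import Mathlib

section
/- For β > 1, if m_β ∈ (0,1) satisfies m_β = tanh(β m_β), then the derivative of the map x ↦ tanh(β x) at x = m_β is strictly less than 1, i.e., β(1 - tanh(β m_β)²) = β(1 - m_β²) < 1. -/
/-!
At a positive fixed point `m = tanh t` with `t = β m`, the slope is
`β (1 - m²) = (t / m) sech² t = t / (sinh t cosh t) = 2t / sinh 2t`, which is `< 1`
because `sinh s > s` for `s > 0`.
-/

namespace Real

theorem one_sub_tanh_sq (x : ℝ) : 1 - tanh x ^ 2 = (cosh x ^ 2)⁻¹ := by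
  have hc : cosh x ≠ 0 := (cosh_pos x).ne'
  rw [tanh_eq_sinh_div_cosh, div_pow, cosh_sq]
  field_simp
  ring

theorem hasDerivAt_tanh (x : ℝ) : HasDerivAt tanh (1 - tanh x ^ 2) x := by
  have h := (hasDerivAt_sinh x).div (hasDerivAt_cosh x) (cosh_pos x).ne'
  rw [one_sub_tanh_sq, funext tanh_eq_sinh_div_cosh]
  refine h.congr_deriv ?_
  rw [← sq, ← sq, cosh_sq]
  field_simp
  ring

theorem mul_one_sub_tanh_sq_lt_tanh {t : ℝ} (ht : 0 < t) : t * (1 - tanh t ^ 2) < tanh t := by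
  have hc : 0 < cosh t := cosh_pos t
  have h_lt : t < sinh t * cosh t := by
    have := self_lt_sinh_iff.mpr (mul_pos two_pos ht)
    rw [sinh_two_mul] at this
    linarith
  calc t * (1 - tanh t ^ 2) = t / cosh t ^ 2 := by rw [one_sub_tanh_sq, div_eq_mul_inv]
    _ < sinh t * cosh t / cosh t ^ 2 := by gcongr
    _ = tanh t := by rw [tanh_eq_sinh_div_cosh]; field_simp

end Real

/-- For β > 1, if m_β ∈ (0,1) satisfies m_β = tanh(β m_β), then the derivative
of x ↦ tanh(β x) at x = m_β, namely β(1 - tanh(β m_β)²) = β(1 - m_β²),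
is strictly less than 1. -/
theorem deriv_tanh_at_fixed_point_lt_one (β m : ℝ) (hβ : 1 < β)
    (hm : m ∈ Set.Ioo (0 : ℝ) 1) (hfix : m = Real.tanh (β * m)) :
    HasDerivAt (fun x : ℝ => Real.tanh (β * x)) (β * (1 - Real.tanh (β * m) ^ 2)) m ∧
      β * (1 - Real.tanh (β * m) ^ 2) = β * (1 - m ^ 2) ∧
      β * (1 - m ^ 2) < 1 := by
  have hm0 : 0 < m := hm.1
  refine ⟨?_, by rw [← hfix], ?_⟩
  · exact ((Real.hasDerivAt_tanh (β * m)).comp m (hasDerivAt_const_mul β)).congr_deriv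
      (mul_comm _ _)
  · have h := Real.mul_one_sub_tanh_sq_lt_tanh (mul_pos (by linarith) hm0 : 0 < β * m)
    rw [← hfix, mul_right_comm] at h
    exact (mul_lt_iff_lt_one_left hm0).mp h
end

section
/- Holley's inequality criterion: Let F be finite and H, H⁺ : {-1,+1}^F → ℝ be energy functions. If for all σ, τ one has -H(σ∧τ) - H⁺(σ∨τ) ≥ -H(σ) - H⁺(τ), then the Gibbs measure μ with density proportional to e^{-H} is stochastically dominated by μ⁺ with density proportional to e^{-H⁺}: for every monotone increasing f : {-1,+1}^F → ℝ, ∫ f dμ ≤ ∫ f dμ⁺. -/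
open Finset

/-- Holley's inequality criterion. Spin configurations in {-1,+1}^F are encoded
as elements of F → Bool (false ↦ -1, true ↦ +1), with the pointwise lattice
structure. If -H(σ∧τ) - H⁺(σ∨τ) ≥ -H(σ) - H⁺(τ) for all σ, τ, then the Gibbs
measure with density ∝ e^{-H} is stochastically dominated by the one with
density ∝ e^{-H⁺}: for every monotone f, ⟨f⟩_H ≤ ⟨f⟩_{H⁺}. -/
theorem holley_criterion (F : Type*) [Fintype F] [DecidableEq F]
    (H Hp : (F → Bool) → ℝ)
    (holley : ∀ σ τ : F → Bool,
      -H (σ ⊓ τ) - Hp (σ ⊔ τ) ≥ -H σ - Hp τ)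
    (f : (F → Bool) → ℝ) (hf : Monotone f) :
    (∑ σ : F → Bool, f σ * Real.exp (-H σ)) / (∑ σ : F → Bool, Real.exp (-H σ)) ≤
      (∑ σ : F → Bool, f σ * Real.exp (-Hp σ)) /
        (∑ σ : F → Bool, Real.exp (-Hp σ)) := by
  set a : (F → Bool) → ℝ := fun σ => Real.exp (-H σ) with ha
  set b : (F → Bool) → ℝ := fun σ => Real.exp (-Hp σ) with hb
  have hab : ∀ σ τ : F → Bool, a σ * b τ ≤ a (σ ⊓ τ) * b (σ ⊔ τ) := by
    intro σ τ
    rw [ha, hb, ← Real.exp_add, ← Real.exp_add]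
    exact Real.exp_le_exp.2 (by linarith [holley σ τ])
  set g : (F → Bool) → ℝ := fun σ => f σ - f ⊥ with hg
  have hg0 : (0 : (F → Bool) → ℝ) ≤ g := fun σ => by
    simp only [hg, Pi.zero_apply, sub_nonneg]; exact hf bot_le
  have ha0 : (0 : (F → Bool) → ℝ) ≤ a := fun σ => (Real.exp_pos _).le
  have hb0 : (0 : (F → Bool) → ℝ) ≤ b := fun σ => (Real.exp_pos _).le
  have key : (∑ σ, g σ * a σ) * (∑ σ, b σ) ≤ (∑ σ, a σ) * (∑ σ, g σ * b σ) := by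
    have := four_functions_theorem_univ (f₁ := fun σ => g σ * a σ) (f₂ := b)
      (f₃ := a) (f₄ := fun σ => g σ * b σ)
      (fun σ => mul_nonneg (hg0 σ) (ha0 σ)) hb0 ha0
      (fun σ => mul_nonneg (hg0 σ) (hb0 σ)) ?_
    · exact this
    · intro σ τ
      have h1 : g σ ≤ g (σ ⊔ τ) := sub_le_sub_right (hf le_sup_left) _
      calc g σ * a σ * b τ ≤ g (σ ⊔ τ) * (a σ * b τ) := by
            rw [mul_assoc]
            exact mul_le_mul_of_nonneg_right h1 (mul_nonneg (ha0 σ) (hb0 τ))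
        _ ≤ g (σ ⊔ τ) * (a (σ ⊓ τ) * b (σ ⊔ τ)) :=
            mul_le_mul_of_nonneg_left (hab σ τ) (hg0 _)
        _ = a (σ ⊓ τ) * (g (σ ⊔ τ) * b (σ ⊔ τ)) := by ring
  have hA : (0 : ℝ) < ∑ σ, a σ :=
    Finset.sum_pos (fun σ _ => Real.exp_pos _) ⟨⊥, mem_univ _⟩
  have hB : (0 : ℝ) < ∑ σ, b σ :=
    Finset.sum_pos (fun σ _ => Real.exp_pos _) ⟨⊥, mem_univ _⟩
  rw [div_le_div_iff₀ hA hB]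
  have e1 : ∑ σ, f σ * a σ = (∑ σ, g σ * a σ) + f ⊥ * ∑ σ, a σ := by
    rw [Finset.mul_sum, ← Finset.sum_add_distrib]
    exact Finset.sum_congr rfl fun σ _ => by simp [hg]; ring
  have e2 : ∑ σ, f σ * b σ = (∑ σ, g σ * b σ) + f ⊥ * ∑ σ, b σ := by
    rw [Finset.mul_sum, ← Finset.sum_add_distrib]
    exact Finset.sum_congr rfl fun σ _ => by simp [hg]; ring
  rw [e1, e2]
  nlinarith [key]
end

section
/- Peierls convergence: Let c > 0 and for γ ∈ (0,1) set ψ(γ) = e^{-(c/8)γ^{-1/2}}. Then for all sufficiently small γ > 0, (1+ψ)^8 e^{-(c/2)γ^{-1/2}} 3^{γ^{-1/4}} + ∑_{n≥1} 4n (1+ψ)^{2n+8} e^{-n c γ^{2}} e^{-(c/4)γ^{-1/2}} < ψ(γ). -/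
/-!
Put `u = γ^{-1/4}`, so that `γ^{-1/2} = u²`, `γ² = u⁻⁸` and `ψ = e^{-(c/8)u²}`; then `γ → 0⁺`
means `u → ∞`. The first term is `(1+ψ)^8 ψ^4 3^u ≤ 256 ψ³`, since `3^u ≤ ψ⁻¹` once
`u log 3 ≤ (c/8)u²`. The series is `4(1+ψ)^8 ψ² · r/(1-r)²` with `r = (1+ψ)² e^{-s}`, `s = c u⁻⁸`;
because `ψ` decays much faster than `s`, `1 - r ≥ s/4`, so the series is at most
`16384 ψ² u^16 / c²`. Both bounds are `o(ψ)`.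
-/

open Filter Real Topology

lemma exp_neg_le_one_sub_half {v : ℝ} (hv0 : 0 ≤ v) (hv1 : v ≤ 1) : exp (-v) ≤ 1 - v / 2 := by
  have h1 : 1 + v ≤ exp v := by linarith [add_one_le_exp v]
  have h2 : exp v * exp (-v) = 1 := by rw [← exp_add, add_neg_cancel, exp_zero]
  nlinarith [exp_pos (-v)]

lemma one_add_sq_mul_exp_neg_le {ψ s : ℝ} (hψ : 0 ≤ ψ) (hψs : ψ ≤ s / 4) (hs : s ≤ 2) :
    (1 + ψ) ^ 2 * exp (-s) ≤ 1 - s / 4 := by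
  calc (1 + ψ) ^ 2 * exp (-s) ≤ exp ψ ^ 2 * exp (-s) := by
        gcongr
        linarith [add_one_le_exp ψ]
    _ = exp (2 * ψ - s) := by rw [← exp_nat_mul, ← exp_add]; push_cast; ring_nf
    _ ≤ exp (-(s / 2)) := by gcongr; linarith
    _ ≤ 1 - s / 4 := by linarith [exp_neg_le_one_sub_half (v := s / 2) (by linarith) (by linarith)]

lemma peierls_series_le {ψ c t K : ℝ} (hψ : 0 ≤ ψ) (hs : 0 < c * t) (hs2 : c * t ≤ 2)
    (hψs : ψ ≤ c * t / 4) (hK : 0 ≤ K) :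
    ∑' n : ℕ, 4 * (n : ℝ) * (1 + ψ) ^ (2 * n + 8) * exp (-(n : ℝ) * c * t) * K ≤
      16384 * K / (c * t) ^ 2 := by
  set r := (1 + ψ) ^ 2 * exp (-(c * t)) with hr_def
  have hr0 : 0 ≤ r := by positivity
  have hr1 : r ≤ 1 - c * t / 4 := one_add_sq_mul_exp_neg_le hψ hψs hs2
  have hterm : ∀ n : ℕ, 4 * (n : ℝ) * (1 + ψ) ^ (2 * n + 8) * exp (-(n : ℝ) * c * t) * K =
      4 * (1 + ψ) ^ 8 * K * (n * r ^ n) := by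
    intro n
    rw [hr_def, mul_pow, ← exp_nat_mul, pow_add, pow_mul]
    ring_nf
  have hnorm : ‖r‖ < 1 := by rw [norm_of_nonneg hr0]; linarith
  rw [tsum_congr hterm, tsum_mul_left, tsum_coe_mul_geometric_of_norm_lt_one hnorm]
  have hp8 : (1 + ψ) ^ 8 ≤ 2 ^ 8 := by gcongr; linarith
  have hfrac : r / (1 - r) ^ 2 ≤ 1 / (c * t / 4) ^ 2 := by
    gcongr
    · linarith
    · linarith
  calc 4 * (1 + ψ) ^ 8 * K * (r / (1 - r) ^ 2) ≤ 4 * 2 ^ 8 * K * (1 / (c * t / 4) ^ 2) := by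
        gcongr
    _ = 16384 * K / (c * t) ^ 2 := by ring

lemma peierls_first_term_le {c u : ℝ} (hc : 0 ≤ c) (hu : u * log 3 ≤ c / 8 * u ^ 2) :
    (1 + exp (-(c / 8) * u ^ 2)) ^ 8 * exp (-(c / 2) * u ^ 2) * (3 : ℝ) ^ u ≤
      256 * exp (-(c / 8) * u ^ 2) ^ 3 := by
  set ψ := exp (-(c / 8) * u ^ 2)
  have hψ1 : ψ ≤ 1 := exp_le_one_iff.2 (by nlinarith [sq_nonneg u])
  have h4 : exp (-(c / 2) * u ^ 2) = ψ ^ 4 := by rw [← exp_nat_mul]; ring_nf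
  have h3 : ψ * (3 : ℝ) ^ u ≤ 1 := by
    rw [rpow_def_of_pos (by norm_num), ← exp_add, exp_le_one_iff]
    linarith
  calc (1 + ψ) ^ 8 * exp (-(c / 2) * u ^ 2) * (3 : ℝ) ^ u
        = (1 + ψ) ^ 8 * ψ ^ 3 * (ψ * 3 ^ u) := by rw [h4]; ring
    _ ≤ 2 ^ 8 * ψ ^ 3 * 1 := by gcongr; linarith
    _ = 256 * ψ ^ 3 := by norm_num

lemma tendsto_sq_pow_mul_exp_neg_mul_sq {a : ℝ} (ha : 0 < a) (k : ℕ) :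
    Tendsto (fun u : ℝ => (u ^ 2) ^ k * exp (-a * u ^ 2)) atTop (𝓝 0) := by
  refine ((tendsto_rpow_mul_exp_neg_mul_atTop_nhds_zero k a ha).comp
    (tendsto_pow_atTop two_ne_zero)).congr fun u => ?_
  simp [rpow_natCast]

theorem peierls_self_consistency_atTop {c : ℝ} (hc : 0 < c) : ∀ᶠ u : ℝ in atTop,
    (1 + exp (-(c / 8) * u ^ 2)) ^ 8 * exp (-(c / 2) * u ^ 2) * (3 : ℝ) ^ u +
      (∑' n : ℕ, 4 * (n : ℝ) * (1 + exp (-(c / 8) * u ^ 2)) ^ (2 * n + 8) *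
        exp (-(n : ℝ) * c * (u ^ 8)⁻¹) * exp (-(c / 4) * u ^ 2)) <
    exp (-(c / 8) * u ^ 2) := by
  have hdecay := tendsto_sq_pow_mul_exp_neg_mul_sq (a := c / 8) (by positivity)
  have hsmall : Tendsto (fun u : ℝ => 256 * exp (-(c / 8) * u ^ 2) ^ 2 +
      16384 / c ^ 2 * ((u ^ 2) ^ 8 * exp (-(c / 8) * u ^ 2))) atTop (𝓝 0) := by
    simpa using (((hdecay 0).pow 2).const_mul 256).add ((hdecay 8).const_mul (16384 / c ^ 2))
  have hinv : Tendsto (fun u : ℝ => (u ^ 8)⁻¹) atTop (𝓝 0) :=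
    tendsto_inv_atTop_zero.comp (tendsto_pow_atTop (by norm_num))
  filter_upwards [eventually_gt_atTop 0, eventually_ge_atTop (8 * log 3 / c),
    (hdecay 4).eventually (gt_mem_nhds (by positivity : (0 : ℝ) < c / 4)),
    hinv.eventually (ge_mem_nhds (by positivity : (0 : ℝ) < 2 / c)),
    hsmall.eventually (gt_mem_nhds one_pos)] with u hu0 hulog hψs hs2 hlt
  set ψ := exp (-(c / 8) * u ^ 2)
  have hψ0 : 0 < ψ := exp_pos _
  have hK : exp (-(c / 4) * u ^ 2) = ψ ^ 2 := by rw [← exp_nat_mul]; ring_nf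
  have hfirst := peierls_first_term_le hc.le (u := u) (by
    rw [div_le_iff₀ hc] at hulog
    nlinarith)
  have hseries := peierls_series_le (c := c) (t := (u ^ 8)⁻¹) (K := ψ ^ 2) hψ0.le (by positivity)
    (by rwa [le_div_iff₀ hc, mul_comm] at hs2)
    (by rw [← pow_mul] at hψs; field_simp; linarith) (sq_nonneg ψ)
  rw [hK]
  calc _ ≤ 256 * ψ ^ 3 + 16384 * ψ ^ 2 / (c * (u ^ 8)⁻¹) ^ 2 := add_le_add hfirst hseries
    _ = ψ * (256 * ψ ^ 2 + 16384 / c ^ 2 * ((u ^ 2) ^ 8 * ψ)) := by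
      field_simp
    _ < ψ * 1 := by gcongr
    _ = ψ := mul_one ψ

/-- Peierls convergence: with ψ(γ) = e^{-(c/8)γ^{-1/2}}, for all sufficiently
small γ > 0,
(1+ψ)^8 e^{-(c/2)γ^{-1/2}} 3^{γ^{-1/4}}
  + ∑_{n≥1} 4n (1+ψ)^{2n+8} e^{-n c γ²} e^{-(c/4)γ^{-1/2}} < ψ(γ). -/
theorem peierls_self_consistency (c : ℝ) (hc : 0 < c) :
    ∃ γ₀ > (0 : ℝ), ∀ γ : ℝ, 0 < γ → γ < γ₀ →
      (1 + Real.exp (-(c / 8) * γ ^ (-(1 : ℝ) / 2))) ^ 8 *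
          Real.exp (-(c / 2) * γ ^ (-(1 : ℝ) / 2)) *
          (3 : ℝ) ^ (γ ^ (-(1 : ℝ) / 4)) +
        (∑' n : ℕ, 4 * (n : ℝ) *
          (1 + Real.exp (-(c / 8) * γ ^ (-(1 : ℝ) / 2))) ^ (2 * n + 8) *
          Real.exp (-(n : ℝ) * c * γ ^ 2) *
          Real.exp (-(c / 4) * γ ^ (-(1 : ℝ) / 2))) <
      Real.exp (-(c / 8) * γ ^ (-(1 : ℝ) / 2)) := by
  have hu : Tendsto (fun γ : ℝ => γ ^ (-(1 : ℝ) / 4)) (𝓝[>] 0) atTop :=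
    tendsto_rpow_neg_nhdsGT_zero (by norm_num)
  obtain ⟨γ₀, hγ₀, h⟩ := (nhdsGT_basis (0 : ℝ)).eventually_iff.1
    (hu.eventually (peierls_self_consistency_atTop hc))
  refine ⟨γ₀, hγ₀, fun γ hγ hγγ₀ => ?_⟩
  have hsq : (γ ^ (-(1 : ℝ) / 4)) ^ 2 = γ ^ (-(1 : ℝ) / 2) := by
    rw [← rpow_natCast, ← rpow_mul hγ.le]; norm_num
  have h8 : (γ ^ (-(1 : ℝ) / 4)) ^ 8 = (γ ^ 2)⁻¹ := by
    rw [← rpow_natCast, ← rpow_mul hγ.le, ← rpow_natCast γ 2, ← rpow_neg hγ.le]; norm_num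
  simpa only [hsq, h8, inv_inv] using h ⟨hγ, hγγ₀⟩
end

section
/- For β > 1 there exists κ > 0 such that for all m ∈ [-1,1], f_β(m) - f_β(m_β) ≥ κ · min((m - m_β)², (m + m_β)²). -/
/-!
On `(-1, 1)` the derivative of `f_β` is `ψ(m) = artanh m / β - m`, which is strictly convex on
`[0, 1)` and vanishes at `0` and at `m_β`. On `[m_β / 2, 1)` convexity bounds `ψ` by the secant
through `m_β / 2` and `m_β`, which makes `f_β - c/2 (m - m_β)²` minimal at `m_β`; on `[0, m_β / 2]`
we have `ψ ≤ 0`, so `f_β` is no smaller there than at `m_β / 2`. Since `f_β` is even, the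
negative half of `[-1, 1]` follows.
-/

/-- The binary entropy function. -/
noncomputable def binEntropy (m : ℝ) : ℝ :=
  -((1 - m) / 2) * Real.log ((1 - m) / 2) - ((1 + m) / 2) * Real.log ((1 + m) / 2)

/-- The mean-field free energy density. -/
noncomputable def fBeta (β m : ℝ) : ℝ := -m ^ 2 / 2 - binEntropy m / β

open Set

theorem isMinOn_of_deriv_mul_sub_nonneg {f f' : ℝ → ℝ} {a b x₀ : ℝ}
    (hf : ContinuousOn f (Icc a b)) (hx₀ : x₀ ∈ Icc a b)
    (hderiv : ∀ x ∈ Ioo a b, HasDerivAt f (f' x) x)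
    (hsign : ∀ x ∈ Ioo a b, 0 ≤ f' x * (x - x₀)) : IsMinOn f (Icc a b) x₀ := by
  intro x hx
  rcases le_total x₀ x with hle | hle
  · refine monotoneOn_of_hasDerivWithinAt_nonneg (f' := f') (convex_Icc x₀ b)
      (hf.mono (Icc_subset_Icc_left hx₀.1)) (fun y hy => ?_) (fun y hy => ?_)
      ⟨le_rfl, hx₀.2⟩ ⟨hle, hx.2⟩ hle
    all_goals simp only [interior_Icc] at hy ⊢
    · exact (hderiv y ⟨hx₀.1.trans_lt hy.1, hy.2⟩).hasDerivWithinAt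
    · nlinarith [hsign y ⟨hx₀.1.trans_lt hy.1, hy.2⟩, hy.1]
  · refine antitoneOn_of_hasDerivWithinAt_nonpos (f' := f') (convex_Icc a x₀)
      (hf.mono (Icc_subset_Icc_right hx₀.2)) (fun y hy => ?_) (fun y hy => ?_)
      ⟨hx.1, hle⟩ ⟨hx₀.1, le_rfl⟩ hle
    all_goals simp only [interior_Icc] at hy ⊢
    · exact (hderiv y ⟨hy.1, hy.2.trans_le hx₀.2⟩).hasDerivWithinAt
    · nlinarith [hsign y ⟨hy.1, hy.2.trans_le hx₀.2⟩, hy.2]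

theorem mul_sq_le_sub_of_mul_sq_le_deriv_mul_sub {f f' : ℝ → ℝ} {a b x₀ c : ℝ}
    (hf : ContinuousOn f (Icc a b)) (hx₀ : x₀ ∈ Icc a b)
    (hderiv : ∀ x ∈ Ioo a b, HasDerivAt f (f' x) x)
    (hc : ∀ x ∈ Ioo a b, c * (x - x₀) ^ 2 ≤ f' x * (x - x₀)) {x : ℝ} (hx : x ∈ Icc a b) :
    c / 2 * (x - x₀) ^ 2 ≤ f x - f x₀ := by
  have hmin : IsMinOn (fun y => f y - c / 2 * (y - x₀) ^ 2) (Icc a b) x₀ := by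
    refine isMinOn_of_deriv_mul_sub_nonneg (f' := fun y => f' y - c * (y - x₀))
      (hf.sub (by fun_prop)) hx₀ (fun y hy => ?_) (fun y hy => ?_)
    · refine (hderiv y hy).sub ((((hasDerivAt_id y).sub_const x₀).pow 2).const_mul (c / 2))
        |>.congr_deriv ?_
      simp only [id_eq]
      ring
    · linarith [hc y hy]
  have hx' : f x₀ - c / 2 * (x₀ - x₀) ^ 2 ≤ f x - c / 2 * (x - x₀) ^ 2 := hmin hx
  rw [sub_self, zero_pow two_ne_zero, mul_zero, sub_zero] at hx'
  linarith

theorem ConvexOn.slope_mul_sq_le_sub_mul_sub {g : ℝ → ℝ} {s : Set ℝ} (hg : ConvexOn ℝ s g)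
    {p a x : ℝ} (hp : p ∈ s) (ha : a ∈ s) (hx : x ∈ s) (hpa : p < a) (hpx : p ≤ x) :
    slope g a p * (x - a) ^ 2 ≤ (g x - g a) * (x - a) := by
  rcases eq_or_ne x a with rfl | hxa
  · simp
  have hsq : 0 < (x - a) ^ 2 := by positivity [sub_ne_zero.2 hxa]
  calc slope g a p * (x - a) ^ 2 ≤ (g x - g a) / (x - a) * (x - a) ^ 2 := by
        rw [slope_def_field]
        exact mul_le_mul_of_nonneg_right (hg.secant_mono ha hp hx hpa.ne hxa hpx) hsq.le
    _ = (g x - g a) * (x - a) := by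
        field_simp [sub_ne_zero.2 hxa]

theorem exists_pos_mul_sq_le_sub_of_strictConvexOn_deriv {f g : ℝ → ℝ} {l a b : ℝ}
    (hla : l < a) (hab : a < b) (hf : ContinuousOn f (Icc l b))
    (hfg : ∀ x ∈ Ioo l b, HasDerivAt f (g x) x) (hg : StrictConvexOn ℝ (Ico l b) g)
    (hgl : g l = 0) (hga : g a = 0) :
    ∃ κ > 0, ∀ x ∈ Icc l b, κ * (x - a) ^ 2 ≤ f x - f a := by
  set p := (l + a) / 2 with hpdef
  have hlp : l < p := by linarith [hpdef]
  have hpa : p < a := by linarith [hpdef]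
  have hl : l ∈ Ico l b := ⟨le_rfl, hla.trans hab⟩
  have ha : a ∈ Ico l b := ⟨hla.le, hab⟩
  have hgp : g p < 0 := by
    have := hg.lt_on_openSegment hl ha hla.ne (by rw [openSegment_eq_Ioo hla]; exact ⟨hlp, hpa⟩)
    rwa [hgl, hga, max_self] at this
  set c := slope g a p with hcdef
  have hc : 0 < c := by
    rw [hcdef, slope_def_field, hga]
    exact div_pos_of_neg_of_neg (by linarith) (by linarith)
  have hright : ∀ x ∈ Icc p b, c / 2 * (x - a) ^ 2 ≤ f x - f a := fun x hx =>
    mul_sq_le_sub_of_mul_sq_le_deriv_mul_sub (hf.mono (Icc_subset_Icc_left hlp.le))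
      ⟨hpa.le, hab.le⟩ (fun y hy => hfg y ⟨hlp.trans hy.1, hy.2⟩)
      (fun y hy => by
        simpa only [hga, sub_zero] using hg.convexOn.slope_mul_sq_le_sub_mul_sub
          ⟨hlp.le, hpa.trans hab⟩ ha ⟨(hlp.trans hy.1).le, hy.2⟩ hpa hy.1.le) hx
  have hleft : IsMinOn f (Icc l p) p := by
    refine isMinOn_of_deriv_mul_sub_nonneg (hf.mono (Icc_subset_Icc_right (hpa.trans hab).le))
      ⟨hlp.le, le_rfl⟩ (fun y hy => hfg y ⟨hy.1, hy.2.trans (hpa.trans hab)⟩) (fun y hy => ?_)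
    have hgy : g y ≤ 0 := by
      have := hg.convexOn.le_on_segment hl ha
        (by rw [segment_eq_Icc hla.le]; exact ⟨hy.1.le, (hy.2.trans hpa).le⟩)
      rwa [hgl, hga, max_self] at this
    nlinarith [hy.2]
  refine ⟨c / 8, by positivity, fun x hx => ?_⟩
  rcases le_total p x with hpx | hxp
  · nlinarith [hright x ⟨hpx, hx.2⟩, sq_nonneg (x - a)]
  · have hfx : f p ≤ f x := hleft ⟨hx.1, hxp⟩
    have hfp := hright p ⟨le_rfl, (hpa.trans hab).le⟩
    have hsq : (x - a) ^ 2 ≤ 4 * (p - a) ^ 2 := by nlinarith [hx.1, hpdef]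
    nlinarith

theorem Real.artanh_eq_log_sub_log {x : ℝ} (hx : x ∈ Ioo (-1) 1) :
    artanh x = (log (1 + x) - log (1 - x)) / 2 := by
  rw [artanh_eq_half_log (Ioo_subset_Icc_self hx),
    log_div (by linarith [hx.1]) (by linarith [hx.2])]
  ring

theorem Real.hasDerivAt_artanh {x : ℝ} (hx : x ∈ Ioo (-1) 1) :
    HasDerivAt artanh (1 - x ^ 2)⁻¹ x := by
  have hpos : 1 + x ≠ 0 := by linarith [hx.1]
  have hneg : 1 - x ≠ 0 := by linarith [hx.2]
  have hlog : HasDerivAt (fun y => (log (1 + y) - log (1 - y)) / 2) (1 - x ^ 2)⁻¹ x := by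
    refine ((((hasDerivAt_id x).const_add 1).log hpos).sub
      (((hasDerivAt_id x).const_sub 1).log hneg)).div_const 2 |>.congr_deriv ?_
    have hsq : 1 - x ^ 2 ≠ 0 := by rw [show 1 - x ^ 2 = (1 + x) * (1 - x) by ring]; positivity
    simp only [id_eq]
    field_simp
    ring
  exact hlog.congr_of_eventuallyEq <|
    Filter.eventually_of_mem (isOpen_Ioo.mem_nhds hx) fun y hy => artanh_eq_log_sub_log hy

theorem binEntropy_eq_binEntropy_one_add_div_two (m : ℝ) :
    binEntropy m = Real.binEntropy ((1 + m) / 2) := by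
  rw [binEntropy, Real.binEntropy_eq_negMulLog_add_negMulLog_one_sub,
    show 1 - (1 + m) / 2 = (1 - m) / 2 by ring, Real.negMulLog, Real.negMulLog]
  ring

theorem fBeta_neg (β m : ℝ) : fBeta β (-m) = fBeta β m := by
  simp only [fBeta, binEntropy_eq_binEntropy_one_add_div_two, even_two.neg_pow]
  rw [show (1 + -m) / 2 = 1 - (1 + m) / 2 by ring, Real.binEntropy_one_sub]

theorem continuous_fBeta (β : ℝ) : Continuous (fBeta β) := by
  unfold fBeta
  simp only [binEntropy_eq_binEntropy_one_add_div_two]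
  fun_prop

theorem hasDerivAt_binEntropy {m : ℝ} (hm : m ∈ Ioo (-1) 1) :
    HasDerivAt binEntropy (-Real.artanh m) m := by
  have hp₀ : (1 + m) / 2 ≠ 0 := by linarith [hm.1]
  have hp₁ : (1 + m) / 2 ≠ 1 := by linarith [hm.2]
  have h := (Real.hasDerivAt_binEntropy hp₀ hp₁).comp m
    (((hasDerivAt_id m).const_add 1).div_const 2)
  rw [show binEntropy = Real.binEntropy ∘ fun x => (1 + id x) / 2 from
    funext binEntropy_eq_binEntropy_one_add_div_two]
  refine h.congr_deriv ?_
  rw [Real.artanh_eq_log_sub_log hm, show 1 - (1 + m) / 2 = (1 - m) / 2 by ring,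
    Real.log_div (by linarith [hm.2]) two_ne_zero, Real.log_div (by linarith [hm.1]) two_ne_zero]
  ring

theorem hasDerivAt_fBeta (β : ℝ) {m : ℝ} (hm : m ∈ Ioo (-1) 1) :
    HasDerivAt (fBeta β) (Real.artanh m / β - m) m := by
  refine ((hasDerivAt_pow 2 m).neg.div_const 2).sub
    ((hasDerivAt_binEntropy hm).div_const β) |>.congr_deriv ?_
  ring

theorem strictConvexOn_artanh_div_sub {β : ℝ} (hβ : 0 < β) :
    StrictConvexOn ℝ (Ico 0 1) (fun m => Real.artanh m / β - m) := by
  have hderiv : ∀ x ∈ Ioo (-1 : ℝ) 1,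
      HasDerivAt (fun m => Real.artanh m / β - m) ((1 - x ^ 2)⁻¹ / β - 1) x := fun x hx =>
    ((Real.hasDerivAt_artanh hx).div_const β).sub (hasDerivAt_id x)
  refine StrictMonoOn.strictConvexOn_of_deriv (convex_Ico 0 1)
    (fun x hx => (hderiv x ⟨by linarith [hx.1], hx.2⟩).continuousAt.continuousWithinAt) ?_
  rw [interior_Ico]
  intro x hx y hy hxy
  rw [(hderiv x ⟨by linarith [hx.1], hx.2⟩).deriv, (hderiv y ⟨by linarith [hy.1], hy.2⟩).deriv]
  have : 0 < 1 - y ^ 2 := by nlinarith [hy.1, hy.2]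
  gcongr
  nlinarith [hx.1]

theorem artanh_div_sub_eq_zero_of_eq_tanh {β m : ℝ} (hβ : β ≠ 0) (hfix : m = Real.tanh (β * m)) :
    Real.artanh m / β - m = 0 := by
  conv_lhs => rw [hfix, Real.artanh_tanh, mul_div_cancel_left₀ _ hβ]
  rw [← hfix, sub_self]

/-- Quadratic stability: for β > 1 there is κ > 0 with
f_β(m) - f_β(m_β) ≥ κ min((m-m_β)², (m+m_β)²) for all m ∈ [-1,1]. -/
theorem fBeta_quadratic_stability (β mβ : ℝ) (hβ : 1 < β)
    (hmβ : mβ ∈ Set.Ioo (0 : ℝ) 1) (hfix : mβ = Real.tanh (β * mβ)) :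
    ∃ κ > (0 : ℝ), ∀ m ∈ Set.Icc (-1 : ℝ) 1,
      fBeta β m - fBeta β mβ ≥ κ * min ((m - mβ) ^ 2) ((m + mβ) ^ 2) := by
  have hβ₀ : 0 < β := by linarith
  obtain ⟨κ, hκ, hgrowth⟩ := exists_pos_mul_sq_le_sub_of_strictConvexOn_deriv hmβ.1 hmβ.2
    (continuous_fBeta β).continuousOn
    (fun x hx => hasDerivAt_fBeta β ⟨by linarith [hx.1], hx.2⟩)
    (strictConvexOn_artanh_div_sub hβ₀) (by simp)
    (artanh_div_sub_eq_zero_of_eq_tanh hβ₀.ne' hfix)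
  refine ⟨κ, hκ, fun m hm => ?_⟩
  rw [ge_iff_le]
  rcases le_total 0 m with hm₀ | hm₀
  · calc κ * min ((m - mβ) ^ 2) ((m + mβ) ^ 2) ≤ κ * (m - mβ) ^ 2 := by
          gcongr; exact min_le_left _ _
      _ ≤ fBeta β m - fBeta β mβ := hgrowth m ⟨hm₀, hm.2⟩
  · calc κ * min ((m - mβ) ^ 2) ((m + mβ) ^ 2) ≤ κ * (-m - mβ) ^ 2 := by
          rw [show (-m - mβ) ^ 2 = (m + mβ) ^ 2 by ring]
          gcongr; exact min_le_right _ _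
      _ ≤ fBeta β (-m) - fBeta β mβ := hgrowth (-m) ⟨by linarith, by linarith [hm.1]⟩
      _ = fBeta β m - fBeta β mβ := by rw [fBeta_neg]
end
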